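/- Every independent set of the conflict graph G_AM3 (not necessarily saturated), interpreted as an activity set by taking the candidates in the independent set as activity intervals, is a valid activity set of the temporal labeling instance, i.e., it satisfies requirements (R1), (R2), and (R3). -/

import Mathlib

noncomputable section

/-- A temporal labeling instance `(L, Ψ, C)`: a finite set `L` of labels with positive
weights, for each label a finite set `P ℓ` of pairwise disjoint closed presence intervals
(encoded as pairs `(a,b)` with `a ≤ b`, standing for `[a,b] ⊆ ℝ`), and for each pair of
distinct labels a finite set `C ℓ ℓ'` of closed conflict intervals, each contained in some
presence interval of `ℓ` (and, by symmetry of `C`, of `ℓ'`). -/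
structure TLInstance (L : Type) [Fintype L] [DecidableEq L] where
  w : L → ℝ
  w_pos : ∀ ℓ, 0 < w ℓ
  P : L → Finset (ℝ × ℝ)
  P_wf : ∀ ℓ, ∀ p ∈ P ℓ, p.1 ≤ p.2
  P_disj : ∀ ℓ, ∀ p ∈ P ℓ, ∀ q ∈ P ℓ, p ≠ q →
    Disjoint (Set.Icc p.1 p.2) (Set.Icc q.1 q.2)
  C : L → L → Finset (ℝ × ℝ)
  C_symm : ∀ ℓ ℓ', C ℓ ℓ' = C ℓ' ℓ
  C_self : ∀ ℓ, C ℓ ℓ = ∅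
  C_wf : ∀ ℓ ℓ', ∀ c ∈ C ℓ ℓ', c.1 ≤ c.2
  C_sub : ∀ ℓ ℓ', ∀ c ∈ C ℓ ℓ', ∃ p ∈ P ℓ, p.1 ≤ c.1 ∧ c.2 ≤ p.2

namespace TLInstance

variable {L : Type} [Fintype L] [DecidableEq L] (T : TLInstance L)

/-- Intervals `A` of label `ℓ` and `B` of label `ℓ'` are in conflict: some time `t` in the
intersection of the open intervals `(A.1,A.2) ∩ (B.1,B.2)` lies in a conflict interval of
`ℓ` and `ℓ'`. -/
def InConflict (ℓ ℓ' : L) (A B : ℝ × ℝ) : Prop :=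
  ∃ t : ℝ, A.1 < t ∧ t < A.2 ∧ B.1 < t ∧ t < B.2 ∧
    ∃ d ∈ T.C ℓ ℓ', d.1 ≤ t ∧ t ≤ d.2

/-- An activity set `Φ` (a finite set of closed activity intervals for each label)
is valid: (R1) every activity interval of `ℓ` is contained in some presence interval
of `ℓ`; (R2) each presence interval of `ℓ` contains at most one activity interval of `ℓ`;
(R3) no two activity intervals of distinct labels are in conflict. -/
def Valid (Φ : L → Finset (ℝ × ℝ)) : Prop :=
  (∀ ℓ, ∀ A ∈ Φ ℓ, A.1 ≤ A.2 ∧ ∃ p ∈ T.P ℓ, p.1 ≤ A.1 ∧ A.2 ≤ p.2) ∧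
  (∀ ℓ, ∀ p ∈ T.P ℓ, ∀ A ∈ Φ ℓ, ∀ B ∈ Φ ℓ,
    p.1 ≤ A.1 → A.2 ≤ p.2 → p.1 ≤ B.1 → B.2 ≤ p.2 → A = B) ∧
  (∀ ℓ ℓ', ℓ ≠ ℓ' → ∀ A ∈ Φ ℓ, ∀ B ∈ Φ ℓ', ¬ T.InConflict ℓ ℓ' A B)

/-- Every activity interval `A` of `ℓ`, contained in presence interval `p` of `ℓ`, is
justified: its start equals `p.1` or there is a witness label `ℓ'` with an activity
interval containing `A.1` and a conflict interval of `ℓ` and `ℓ'` with right endpoint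
`A.1`; symmetrically for its end. -/
def Justified (Φ : L → Finset (ℝ × ℝ)) : Prop :=
  ∀ ℓ, ∀ A ∈ Φ ℓ, ∀ p ∈ T.P ℓ, p.1 ≤ A.1 → A.2 ≤ p.2 →
    (A.1 = p.1 ∨ ∃ ℓ', ℓ' ≠ ℓ ∧ (∃ B ∈ Φ ℓ', B.1 ≤ A.1 ∧ A.1 ≤ B.2) ∧
      ∃ d ∈ T.C ℓ ℓ', d.2 = A.1) ∧
    (A.2 = p.2 ∨ ∃ ℓ', ℓ' ≠ ℓ ∧ (∃ B ∈ Φ ℓ', B.1 ≤ A.2 ∧ A.2 ≤ B.2) ∧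
      ∃ d ∈ T.C ℓ ℓ', d.1 = A.2)

/-- Activity model AM3: the activity set is valid and every activity interval is justified. -/
def AM3 (Φ : L → Finset (ℝ × ℝ)) : Prop := T.Valid Φ ∧ T.Justified Φ

/-- Activity model AM2: AM3, and moreover every activity interval of `ℓ` starts at the
left endpoint of the presence interval of `ℓ` containing it. -/
def AM2 (Φ : L → Finset (ℝ × ℝ)) : Prop :=
  T.AM3 Φ ∧ ∀ ℓ, ∀ A ∈ Φ ℓ, ∀ p ∈ T.P ℓ, p.1 ≤ A.1 → A.2 ≤ p.2 → A.1 = p.1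

/-- Activity model AM1: AM3, and moreover every activity interval of `ℓ` equals a presence
interval of `ℓ`. -/
def AM1 (Φ : L → Finset (ℝ × ℝ)) : Prop :=
  T.AM3 Φ ∧ ∀ ℓ, ∀ A ∈ Φ ℓ, A ∈ T.P ℓ

/-- The total weight of an activity set: the sum over all activity intervals `[a,b]` of a
label `ℓ` of `(b - a) * w ℓ`. -/
def weightOf (Φ : L → Finset (ℝ × ℝ)) : ℝ :=
  ∑ ℓ : L, ∑ A ∈ Φ ℓ, (A.2 - A.1) * T.w ℓ

/-- `A = [s,t]` is a candidate of the presence interval `p = [a,b]` of label `ℓ`: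
`[s,t] ⊆ [a,b]`, `s ≤ t`, `s = a` or `s` is the right endpoint of a conflict interval of
`ℓ` contained in `[a,b]`, and `t = b` or `t` is the left endpoint of a conflict interval
of `ℓ` contained in `[a,b]`. -/
def IsCandidate (ℓ : L) (p A : ℝ × ℝ) : Prop :=
  p ∈ T.P ℓ ∧ A.1 ≤ A.2 ∧ p.1 ≤ A.1 ∧ A.2 ≤ p.2 ∧
  (A.1 = p.1 ∨ ∃ ℓ', ∃ d ∈ T.C ℓ ℓ', p.1 ≤ d.1 ∧ d.2 ≤ p.2 ∧ d.2 = A.1) ∧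
  (A.2 = p.2 ∨ ∃ ℓ', ∃ d ∈ T.C ℓ ℓ', p.1 ≤ d.1 ∧ d.2 ≤ p.2 ∧ d.1 = A.2)

/-- The vertices of the conflict graph `G_AM3`: triples (label, presence interval,
candidate interval). -/
abbrev Vtx := {x : L × (ℝ × ℝ) × (ℝ × ℝ) // T.IsCandidate x.1 x.2.1 x.2.2}

/-- Two vertices belong to the same cluster: same label and same presence interval. -/
def SameCluster (u v : T.Vtx) : Prop := u.1.1 = v.1.1 ∧ u.1.2.1 = v.1.2.1

/-- Adjacency in the conflict graph `G_AM3`: two distinct candidates of the same presence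
interval are adjacent, and two candidates of distinct labels are adjacent iff some time in
the intersection of their open intervals lies in a conflict interval of the two labels. -/
def Adj (u v : T.Vtx) : Prop :=
  u ≠ v ∧ (T.SameCluster u v ∨
    (u.1.1 ≠ v.1.1 ∧ T.InConflict u.1.1 v.1.1 u.1.2.2 v.1.2.2))

/-- `I` is an independent set of the conflict graph `G_AM3`. -/
def IsIndep (I : Finset T.Vtx) : Prop := ∀ u ∈ I, ∀ v ∈ I, ¬ T.Adj u v

/-- Total vertex weight of a set of vertices of `G_AM3`; the weight of the vertex of
candidate `[s,t]` of label `ℓ` is `(t - s) * w ℓ`. -/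
def wsum (I : Finset T.Vtx) : ℝ := ∑ v ∈ I, (v.1.2.2.2 - v.1.2.2.1) * T.w v.1.1

/-- `I` is saturated: there are no vertices `v ∈ I` and `v' ∉ I` in the same cluster such
that exchanging `v` for `v'` yields an independent set of strictly larger total weight. -/
def Saturated (I : Finset T.Vtx) : Prop :=
  ¬ ∃ v ∈ I, ∃ v' : T.Vtx, v' ∉ I ∧ T.SameCluster v v' ∧
    T.IsIndep (insert v' (I.erase v)) ∧ T.wsum I < T.wsum (insert v' (I.erase v))

/-- The activity set obtained from a set `I` of vertices of `G_AM3` by taking the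
candidates in `I` as activity intervals. -/
def toActivity (I : Finset T.Vtx) (ℓ : L) : Finset (ℝ × ℝ) :=
  (I.filter (fun v => v.1.1 = ℓ)).image (fun v => v.1.2.2)

end TLInstance

/-! Every activity interval of `toActivity I` is the candidate of some vertex of `I`. Since the
presence intervals of a label are disjoint, two activity intervals of `ℓ` inside one presence
interval come from vertices of the same cluster, which is a clique, so independence forces them
to coincide (R2); candidates of distinct labels in conflict are adjacent, which gives (R3). -/

namespace TLInstance

variable {L : Type} [Fintype L] [DecidableEq L] (T : TLInstance L)

theorem mem_toActivity {I : Finset T.Vtx} {ℓ : L} {A : ℝ × ℝ} :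
    A ∈ T.toActivity I ℓ ↔ ∃ v ∈ I, v.1.1 = ℓ ∧ v.1.2.2 = A := by
  simp only [toActivity, Finset.mem_image, Finset.mem_filter, and_assoc]

theorem eq_of_mem_P_of_le {ℓ : L} {p q A : ℝ × ℝ} (hp : p ∈ T.P ℓ) (hq : q ∈ T.P ℓ)
    (hA : A.1 ≤ A.2) (hpA : p.1 ≤ A.1) (hAp : A.2 ≤ p.2) (hqA : q.1 ≤ A.1) (hAq : A.2 ≤ q.2) :
    p = q := by
  by_contra hne
  exact Set.disjoint_left.1 (T.P_disj ℓ p hp q hq hne) ⟨hpA, hA.trans hAp⟩ ⟨hqA, hA.trans hAq⟩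

theorem toActivity_subset_presence (I : Finset T.Vtx) (ℓ : L) :
    ∀ A ∈ T.toActivity I ℓ, A.1 ≤ A.2 ∧ ∃ p ∈ T.P ℓ, p.1 ≤ A.1 ∧ A.2 ≤ p.2 := by
  intro A hA
  obtain ⟨v, -, rfl, rfl⟩ := T.mem_toActivity.1 hA
  obtain ⟨hp, hle, hpv, hvp, -⟩ := v.2
  exact ⟨hle, v.1.2.1, hp, hpv, hvp⟩

variable {T}

theorem IsCandidate.presence_eq {ℓ : L} {p q A : ℝ × ℝ} (hA : T.IsCandidate ℓ p A)
    (hq : q ∈ T.P ℓ) (hqA : q.1 ≤ A.1) (hAq : A.2 ≤ q.2) : p = q := by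
  obtain ⟨hp, hle, hpA, hAp, -⟩ := hA
  exact T.eq_of_mem_P_of_le hp hq hle hpA hAp hqA hAq

theorem IsIndep.eq_of_sameCluster {I : Finset T.Vtx} (hI : T.IsIndep I) {u v : T.Vtx}
    (hu : u ∈ I) (hv : v ∈ I) (huv : T.SameCluster u v) : u = v := by
  by_contra hne
  exact hI u hu v hv ⟨hne, Or.inl huv⟩

theorem IsIndep.toActivity_eq_of_presence {I : Finset T.Vtx} (hI : T.IsIndep I) {ℓ : L}
    {p : ℝ × ℝ} (hp : p ∈ T.P ℓ) {A B : ℝ × ℝ} (hA : A ∈ T.toActivity I ℓ)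
    (hB : B ∈ T.toActivity I ℓ) (hpA : p.1 ≤ A.1) (hAp : A.2 ≤ p.2) (hpB : p.1 ≤ B.1)
    (hBp : B.2 ≤ p.2) : A = B := by
  obtain ⟨u, hu, rfl, rfl⟩ := T.mem_toActivity.1 hA
  obtain ⟨v, hv, hvu, rfl⟩ := T.mem_toActivity.1 hB
  have hpu : u.1.2.1 = p := u.2.presence_eq hp hpA hAp
  have hpv : v.1.2.1 = p := v.2.presence_eq (hvu ▸ hp) hpB hBp
  rw [hI.eq_of_sameCluster hu hv ⟨hvu.symm, hpu.trans hpv.symm⟩]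

theorem IsIndep.toActivity_not_inConflict {I : Finset T.Vtx} (hI : T.IsIndep I) {ℓ ℓ' : L}
    (hne : ℓ ≠ ℓ') {A B : ℝ × ℝ} (hA : A ∈ T.toActivity I ℓ) (hB : B ∈ T.toActivity I ℓ') :
    ¬ T.InConflict ℓ ℓ' A B := by
  obtain ⟨u, hu, rfl, rfl⟩ := T.mem_toActivity.1 hA
  obtain ⟨v, hv, rfl, rfl⟩ := T.mem_toActivity.1 hB
  intro hconf
  have huv : u ≠ v := fun h => hne (congrArg (·.1.1) h)
  exact hI u hu v hv ⟨huv, Or.inr ⟨hne, hconf⟩⟩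

end TLInstance

/-- Every independent set of the conflict graph `G_AM3` (not necessarily saturated),
interpreted as an activity set by taking the candidates in the independent set as activity
intervals, is a valid activity set, i.e. it satisfies (R1), (R2) and (R3). -/
theorem stmt4 {L : Type} [Fintype L] [DecidableEq L] (T : TLInstance L)
    (I : Finset T.Vtx) (hind : T.IsIndep I) :
    T.Valid (T.toActivity I) :=
  ⟨T.toActivity_subset_presence I,
    fun _ _ hp _ hA _ hB => hind.toActivity_eq_of_presence hp hA hB,
    fun _ _ hne _ hA _ hB => hind.toActivity_not_inConflict hne hA hB⟩
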